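/- arXiv:1407.5398 — 2 statements merged into one kernel-verified Lean document; each statement's English description precedes it below -/
import Mathlib

section
/- Let Σ : ℝ → [𝓗] be a distribution function (left-continuous, non-decreasing, Σ(0)=0, values in bounded self-adjoint operators on a finite-dimensional Hilbert space 𝓗), with associated scalar measure σ and density Ψ ≥ 0 so that Σ(β) − Σ(α) = ∫_{[α,β)} Ψ dσ. Then the multiplication operator Λ_Σ in L²(Σ;𝓗), defined on classes f̃ with s ↦ s f(s) in L²(Σ;𝓗) by Λ_Σ f̃ = π_Σ(s f(s)), is self-adjoint. -/
/-!
Symmetry of `Λ_Σ` is pointwise: `⟪s f(s), Ψ(s) g(s)⟫ = ⟪f(s), Ψ(s) (s g(s))⟫` for real `s`.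
Conversely, let `(π g, y) ∈ Λ_Σ*`. Testing against the truncations `f_n = 1_{|s| ≤ n} s g` gives
`‖π f_n‖² = ⟪y, π f_n⟫`, hence `∫_{|s| ≤ n} s² ⟪g, Ψ g⟫ dσ ≤ ‖y‖²` for all `n`, so `s g` is square
integrable. Then `y - π (s g)` is orthogonal to the domain of `Λ_Σ`, which is dense because
`π (1_{|s| ≤ n} u) → π u` by dominated convergence.
-/

open MeasureTheory

noncomputable section

/-- The adjoint relation `A* = {(k,k') : ⟪k',h⟫ = ⟪k,h'⟫ for all (h,h') ∈ A}`. -/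
def relAdjSet {L : Type*} [NormedAddCommGroup L] [InnerProductSpace ℂ L]
    (A : Set (L × L)) : Set (L × L) :=
  {p | ∀ q ∈ A, (@inner ℂ _ _ p.2 q.1) = @inner ℂ _ _ p.1 q.2}

open scoped InnerProductSpace
open Filter Topology Metric

section LinearRelation

variable {L : Type*} [NormedAddCommGroup L] [InnerProductSpace ℂ L]

def relAdjSubmodule (A : Set (L × L)) : Submodule ℂ (L × L) where
  carrier := relAdjSet A
  add_mem' {p p'} hp hp' q hq := by
    simp only [Prod.fst_add, Prod.snd_add, inner_add_left, hp q hq, hp' q hq]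
  zero_mem' q _ := by simp
  smul_mem' c p hp q hq := by
    simp only [Prod.smul_fst, Prod.smul_snd, inner_smul_left, hp q hq]

theorem mem_relAdjSet_singleton_comm {p q : L × L} : p ∈ relAdjSet {q} ↔ q ∈ relAdjSet {p} := by
  simp only [relAdjSet, Set.mem_singleton_iff, forall_eq, Set.mem_ofPred_eq]
  rw [← inner_conj_symm, ← inner_conj_symm p.1, (starRingEnd ℂ).injective.eq_iff, eq_comm]

theorem mem_relAdjSet_iff_subset {A : Set (L × L)} {p : L × L} :
    p ∈ relAdjSet A ↔ A ⊆ relAdjSet {p} := by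
  refine ⟨fun hp q hq => mem_relAdjSet_singleton_comm.1 fun q' hq' => ?_,
    fun h q hq => mem_relAdjSet_singleton_comm.1 (h hq) q (Set.mem_singleton q)⟩
  rw [Set.mem_singleton_iff.1 hq']
  exact hp q hq

theorem relAdjSet_span (A : Set (L × L)) :
    relAdjSet (Submodule.span ℂ A : Set (L × L)) = relAdjSet A := by
  ext p
  simp only [mem_relAdjSet_iff_subset]
  exact Submodule.span_le (p := relAdjSubmodule {p})

theorem span_subset_relAdjSet_span {A : Set (L × L)} (hA : A ⊆ relAdjSet A) :
    (Submodule.span ℂ A : Set (L × L)) ⊆ relAdjSet (Submodule.span ℂ A : Set (L × L)) := by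
  rw [relAdjSet_span]
  exact Submodule.span_le (p := relAdjSubmodule A) |>.2 hA

end LinearRelation

theorem inner_smul_apply_smul {E F : Type*} [NormedAddCommGroup E] [InnerProductSpace ℂ E]
    [NormedAddCommGroup F] [InnerProductSpace ℂ F] (T : E →L[ℂ] F) (a b : ℝ) (x : F) (y : E) :
    ⟪a • x, T (b • y)⟫_ℂ = ((a * b : ℝ) : ℂ) * ⟪x, T y⟫_ℂ := by
  rw [T.map_smul_of_tower, RCLike.real_smul_eq_coe_smul (K := ℂ) a,
    RCLike.real_smul_eq_coe_smul (K := ℂ) b, inner_smul_left, inner_smul_right]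
  simp [mul_assoc]

theorem re_inner_smul_apply_smul_self {E F : Type*} [NormedAddCommGroup E] [InnerProductSpace ℂ E]
    [NormedAddCommGroup F] [InnerProductSpace ℂ F] (T : E →L[ℂ] F) (a : ℝ) (x : F) (y : E) :
    (⟪a • x, T (a • y)⟫_ℂ).re = a ^ 2 * (⟪x, T y⟫_ℂ).re := by
  rw [inner_smul_apply_smul, Complex.re_ofReal_mul, sq]

theorem inner_apply_smul {E F : Type*} [NormedAddCommGroup E] [InnerProductSpace ℂ E]
    [NormedAddCommGroup F] [InnerProductSpace ℂ F] (T : E →L[ℂ] F) (b : ℝ) (x : F) (y : E) :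
    ⟪x, T (b • y)⟫_ℂ = (b : ℂ) * ⟪x, T y⟫_ℂ := by
  rw [T.map_smul_of_tower, RCLike.real_smul_eq_coe_smul (K := ℂ), inner_smul_right]
  rfl

theorem norm_le_of_inner_eq_inner_self {E : Type*} [NormedAddCommGroup E] [InnerProductSpace ℂ E]
    {x y : E} (h : ⟪y, x⟫_ℂ = ⟪x, x⟫_ℂ) : ‖x‖ ≤ ‖y‖ := by
  rcases (norm_nonneg x).eq_or_lt with hx | hx
  · rw [← hx]; exact norm_nonneg y
  refine le_of_mul_le_mul_right ?_ hx
  calc ‖x‖ * ‖x‖ = ‖⟪y, x⟫_ℂ‖ := by rw [h, inner_self_eq_norm_sq_to_K]; simp [sq]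
    _ ≤ ‖y‖ * ‖x‖ := norm_inner_le_norm y x

def cutoff (n : ℕ) : ℝ → ℝ := (closedBall (0 : ℝ) n).indicator 1

@[fun_prop]
theorem measurable_cutoff (n : ℕ) : Measurable (cutoff n) :=
  measurable_const.indicator measurableSet_closedBall

theorem cutoff_eq_zero_or_one (n : ℕ) (s : ℝ) : cutoff n s = 0 ∨ cutoff n s = 1 := by
  by_cases hs : s ∈ closedBall (0 : ℝ) n <;> simp [cutoff, hs]

theorem abs_cutoff_le_one (n : ℕ) (s : ℝ) : |cutoff n s| ≤ 1 := by
  rcases cutoff_eq_zero_or_one n s with h | h <;> simp [h]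

theorem abs_one_sub_cutoff_le_one (n : ℕ) (s : ℝ) : |1 - cutoff n s| ≤ 1 := by
  rcases cutoff_eq_zero_or_one n s with h | h <;> simp [h]

theorem abs_cutoff_mul_le (n : ℕ) (s : ℝ) : |cutoff n s * s| ≤ n := by
  by_cases hs : s ∈ closedBall (0 : ℝ) n
  · rw [cutoff, Set.indicator_of_mem hs, Pi.one_apply, one_mul]
    simpa using hs
  · simp [cutoff, hs]

theorem eventually_cutoff_eq_one (s : ℝ) : ∀ᶠ n in atTop, cutoff n s = 1 := by
  filter_upwards [tendsto_natCast_atTop_atTop.eventually_ge_atTop |s|] with n hn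
  simp [cutoff, hn]

theorem mul_cutoff_mul_eq_mul_self (n : ℕ) (s : ℝ) :
    s * (cutoff n s * s) = (cutoff n s * s) * (cutoff n s * s) := by
  rcases cutoff_eq_zero_or_one n s with h | h <;> simp [h]

theorem cutoff_mul_sq_mul (n : ℕ) (φ : ℝ → ℝ) :
    (fun s => (cutoff n s * s) ^ 2 * φ s) =
      (closedBall (0 : ℝ) n).indicator (fun s => s ^ 2 * φ s) := by
  ext s
  by_cases hs : s ∈ closedBall (0 : ℝ) n <;> simp [cutoff, hs]

section MultiplicationOperator

variable {𝓗 L : Type*} [NormedAddCommGroup 𝓗] [InnerProductSpace ℂ 𝓗] [MeasurableSpace 𝓗]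
  [NormedAddCommGroup L] [InnerProductSpace ℂ L]
  {σ : Measure ℝ} {Ψ : ℝ → 𝓗 →L[ℂ] 𝓗} {π : (ℝ → 𝓗) → L}

variable (σ Ψ) in
def SqIntegrable (f : ℝ → 𝓗) : Prop :=
  Measurable f ∧ Integrable (fun s => (⟪f s, Ψ s (f s)⟫_ℂ).re) σ

variable (σ Ψ) in
def IsPosSemidefAE : Prop :=
  ∀ᵐ s ∂σ, ∀ k : 𝓗, 0 ≤ (⟪k, Ψ s k⟫_ℂ).re ∧ (⟪k, Ψ s k⟫_ℂ).im = 0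

variable (σ Ψ π) in
def HasIntegralInner : Prop :=
  ∀ f g, SqIntegrable σ Ψ f → SqIntegrable σ Ψ g → ⟪π f, π g⟫_ℂ = ∫ s, ⟪f s, Ψ s (g s)⟫_ℂ ∂σ

theorem SqIntegrable.smul_of_abs_le [BorelSpace 𝓗] {f : ℝ → 𝓗} (hf : SqIntegrable σ Ψ f) {c : ℝ → ℝ}
    (hc : Measurable c) {C : ℝ} (hC : ∀ s, |c s| ≤ C) : SqIntegrable σ Ψ (fun s => c s • f s) := by
  refine ⟨hc.smul hf.1, ?_⟩
  simp only [re_inner_smul_apply_smul_self]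
  refine (hf.2.norm.const_mul (C ^ 2)).mono' ((hc.pow_const 2).aestronglyMeasurable.mul
    hf.2.aestronglyMeasurable) (Eventually.of_forall fun s => ?_)
  rw [norm_mul, norm_pow, Real.norm_eq_abs]
  gcongr
  exact hC s

theorem HasIntegralInner.inner_id_smul_comm (hπ : HasIntegralInner σ Ψ π) {f g : ℝ → 𝓗}
    (hf : SqIntegrable σ Ψ f) (hsf : SqIntegrable σ Ψ (fun s => s • f s))
    (hg : SqIntegrable σ Ψ g) (hsg : SqIntegrable σ Ψ (fun s => s • g s)) :
    ⟪π (fun s => s • f s), π g⟫_ℂ = ⟪π f, π (fun s => s • g s)⟫_ℂ := by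
  rw [hπ _ _ hsf hg, hπ _ _ hf hsg]
  congr 1 with s
  simp

theorem HasIntegralInner.norm_sq_eq (hπ : HasIntegralInner σ Ψ π) (hΨ : IsPosSemidefAE σ Ψ)
    {f : ℝ → 𝓗} (hf : SqIntegrable σ Ψ f) :
    ‖π f‖ ^ 2 = ∫ s, (⟪f s, Ψ s (f s)⟫_ℂ).re ∂σ := by
  have hreal : (fun s => ⟪f s, Ψ s (f s)⟫_ℂ) =ᵐ[σ] fun s => ((⟪f s, Ψ s (f s)⟫_ℂ).re : ℂ) :=
    hΨ.mono fun s hs => Complex.ext rfl (hs (f s)).2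
  rw [norm_sq_eq_re_inner (𝕜 := ℂ), hπ f f hf hf, integral_congr_ae hreal,
    integral_complex_ofReal]
  rfl

theorem HasIntegralInner.tendsto_cutoff_smul [BorelSpace 𝓗] (hπ : HasIntegralInner σ Ψ π)
    (hΨ : IsPosSemidefAE σ Ψ)
    (hπadd : ∀ f g, SqIntegrable σ Ψ f → SqIntegrable σ Ψ g → π (f + g) = π f + π g)
    {u : ℝ → 𝓗} (hu : SqIntegrable σ Ψ u) :
    Tendsto (fun n => π (fun s => cutoff n s • u s)) atTop (𝓝 (π u)) := by
  set φ := fun s => (⟪u s, Ψ s (u s)⟫_ℂ).re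
  have hcut n : SqIntegrable σ Ψ (fun s => cutoff n s • u s) :=
    hu.smul_of_abs_le (measurable_cutoff n) (abs_cutoff_le_one n)
  have htail n : SqIntegrable σ Ψ (fun s => (1 - cutoff n s) • u s) :=
    hu.smul_of_abs_le (measurable_const.sub (measurable_cutoff n)) (abs_one_sub_cutoff_le_one n)
  have hdist n : ‖π (fun s => cutoff n s • u s) - π u‖ ^ 2 =
      ∫ s, (1 - cutoff n s) ^ 2 * φ s ∂σ := by
    have hsplit : π u = π (fun s => cutoff n s • u s) + π (fun s => (1 - cutoff n s) • u s) := by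
      rw [← hπadd _ _ (hcut n) (htail n)]
      congr 1 with s
      simp [← add_smul]
    rw [hsplit, sub_add_cancel_left, norm_neg, hπ.norm_sq_eq hΨ (htail n)]
    simp only [re_inner_smul_apply_smul_self, φ]
  have hbound n : ∀ᵐ s ∂σ, ‖(1 - cutoff n s) ^ 2 * φ s‖ ≤ ‖φ s‖ := Eventually.of_forall fun s => by
    rw [norm_mul, norm_pow, Real.norm_eq_abs]
    exact mul_le_of_le_one_left (norm_nonneg _)
      (pow_le_one₀ (abs_nonneg _) (abs_one_sub_cutoff_le_one n s))
  have hlim : ∀ᵐ s ∂σ, Tendsto (fun n => (1 - cutoff n s) ^ 2 * φ s) atTop (𝓝 0) :=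
    Eventually.of_forall fun s => tendsto_const_nhds.congr' <|
      (eventually_cutoff_eq_one s).mono fun n hn => by simp [hn]
  have htail_tendsto : Tendsto (fun n => ∫ s, (1 - cutoff n s) ^ 2 * φ s ∂σ) atTop (𝓝 0) := by
    simpa using tendsto_integral_of_dominated_convergence (fun s => ‖φ s‖)
      (fun n => ((measurable_const.sub (measurable_cutoff n)).pow_const 2).aestronglyMeasurable.mul
        hu.2.aestronglyMeasurable) hu.2.norm hbound hlim
  have h := htail_tendsto.sqrt
  simp only [← hdist, Real.sqrt_sq (norm_nonneg _), Real.sqrt_zero] at h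
  exact tendsto_iff_norm_sub_tendsto_zero.2 h

theorem HasIntegralInner.sqIntegrable_id_smul_of_norm_le [BorelSpace 𝓗]
    (hπ : HasIntegralInner σ Ψ π) (hΨ : IsPosSemidefAE σ Ψ) {g : ℝ → 𝓗}
    (hg : SqIntegrable σ Ψ g) {C : ℝ} (hC : ∀ n, ‖π (fun s => (cutoff n s * s) • g s)‖ ≤ C) :
    SqIntegrable σ Ψ (fun s => s • g s) := by
  refine ⟨measurable_id.smul hg.1, ?_⟩
  simp only [re_inner_smul_apply_smul_self]
  have hcover := aecover_closedBall (μ := σ) (x := 0) tendsto_natCast_atTop_atTop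
  refine hcover.integrable_of_integral_bounded_of_nonneg_ae (C ^ 2) (fun n => ?_)
    (hΨ.mono fun s hs => mul_nonneg (sq_nonneg s) (hs (g s)).1) (Eventually.of_forall fun n => ?_)
  · exact hg.2.integrableOn.continuousOn_mul (continuous_pow 2).continuousOn
      (isCompact_closedBall 0 n)
  · have hnorm := hπ.norm_sq_eq hΨ (hg.smul_of_abs_le (c := fun s => cutoff n s * s)
      ((measurable_cutoff n).mul measurable_id) (abs_cutoff_mul_le n))
    simp only [re_inner_smul_apply_smul_self] at hnorm
    rw [← integral_indicator measurableSet_closedBall, ← cutoff_mul_sq_mul, ← hnorm]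
    exact pow_le_pow_left₀ (norm_nonneg _) (hC n) 2

variable (σ Ψ π) in
def multGraph : Set (L × L) :=
  {p | ∃ f, SqIntegrable σ Ψ f ∧ SqIntegrable σ Ψ (fun s => s • f s) ∧
    p = (π f, π (fun s => s • f s))}

theorem HasIntegralInner.multGraph_subset_relAdjSet (hπ : HasIntegralInner σ Ψ π) :
    multGraph σ Ψ π ⊆ relAdjSet (multGraph σ Ψ π) := by
  rintro _ ⟨f, hf, hsf, rfl⟩ _ ⟨g, hg, hsg, rfl⟩
  exact hπ.inner_id_smul_comm hf hsf hg hsg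

theorem HasIntegralInner.dense_image_multDomain [BorelSpace 𝓗] (hπ : HasIntegralInner σ Ψ π)
    (hΨ : IsPosSemidefAE σ Ψ)
    (hπadd : ∀ f g, SqIntegrable σ Ψ f → SqIntegrable σ Ψ g → π (f + g) = π f + π g)
    (hπsurj : ∀ x : L, ∃ f, SqIntegrable σ Ψ f ∧ π f = x) :
    Dense (π '' {f | SqIntegrable σ Ψ f ∧ SqIntegrable σ Ψ (fun s => s • f s)}) := by
  intro x
  obtain ⟨u, hu, rfl⟩ := hπsurj x
  refine mem_closure_of_tendsto (hπ.tendsto_cutoff_smul hΨ hπadd hu)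
    (Eventually.of_forall fun n => ⟨_, ⟨hu.smul_of_abs_le (measurable_cutoff n)
      (abs_cutoff_le_one n), ?_⟩, rfl⟩)
  simp_rw [smul_smul]
  exact hu.smul_of_abs_le (measurable_id.mul (measurable_cutoff n)) fun s => by
    rw [mul_comm]; exact abs_cutoff_mul_le n s

theorem HasIntegralInner.norm_cutoff_mul_smul_le_of_mem_relAdjSet [BorelSpace 𝓗]
    (hπ : HasIntegralInner σ Ψ π)
    {g : ℝ → 𝓗} (hg : SqIntegrable σ Ψ g) {y : L}
    (hy : (π g, y) ∈ relAdjSet (multGraph σ Ψ π)) (n : ℕ) :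
    ‖π (fun s => (cutoff n s * s) • g s)‖ ≤ ‖y‖ := by
  have hf : SqIntegrable σ Ψ (fun s => (cutoff n s * s) • g s) :=
    hg.smul_of_abs_le ((measurable_cutoff n).mul measurable_id) (abs_cutoff_mul_le n)
  have hsf : SqIntegrable σ Ψ (fun s => s • (cutoff n s * s) • g s) := by
    simp_rw [smul_smul, mul_cutoff_mul_eq_mul_self]
    refine hg.smul_of_abs_le (C := n * n) (by fun_prop) fun s => ?_
    rw [abs_mul]
    exact mul_le_mul (abs_cutoff_mul_le n s) (abs_cutoff_mul_le n s) (abs_nonneg _) n.cast_nonneg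
  refine norm_le_of_inner_eq_inner_self ?_
  rw [hy _ ⟨_, hf, hsf, rfl⟩, hπ _ _ hg hsf, hπ _ _ hf hf]
  congr 1 with s
  rw [smul_smul, inner_apply_smul, inner_smul_apply_smul, mul_cutoff_mul_eq_mul_self]

theorem HasIntegralInner.relAdjSet_multGraph_subset [BorelSpace 𝓗] (hπ : HasIntegralInner σ Ψ π)
    (hΨ : IsPosSemidefAE σ Ψ)
    (hπadd : ∀ f g, SqIntegrable σ Ψ f → SqIntegrable σ Ψ g → π (f + g) = π f + π g)
    (hπsurj : ∀ x : L, ∃ f, SqIntegrable σ Ψ f ∧ π f = x) :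
    relAdjSet (multGraph σ Ψ π) ⊆ multGraph σ Ψ π := by
  rintro ⟨x, y⟩ hp
  obtain ⟨g, hg, rfl⟩ := hπsurj x
  have hsg := hπ.sqIntegrable_id_smul_of_norm_le hΨ hg
    (hπ.norm_cutoff_mul_smul_le_of_mem_relAdjSet hg hp)
  refine ⟨g, hg, hsg, Prod.ext rfl ?_⟩
  refine (hπ.dense_image_multDomain hΨ hπadd hπsurj).eq_of_inner_left (𝕜 := ℂ) ?_
  rintro _ ⟨f, ⟨hf, hsf⟩, rfl⟩
  rw [hp _ ⟨f, hf, hsf, rfl⟩, hπ.inner_id_smul_comm hg hsg hf hsf]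

end MultiplicationOperator

theorem stmt4_general {𝓗 L : Type*} [NormedAddCommGroup 𝓗] [InnerProductSpace ℂ 𝓗]
    [MeasurableSpace 𝓗] [BorelSpace 𝓗] [NormedAddCommGroup L] [InnerProductSpace ℂ L]
    (σ : Measure ℝ)
    (Ψ : ℝ → 𝓗 →L[ℂ] 𝓗)
    -- Ψ(s) ≥ 0 σ-a.e.
    (hΨpos : ∀ᵐ s ∂σ, ∀ k : 𝓗,
      0 ≤ (@inner ℂ _ _ k (Ψ s k)).re ∧ (@inner ℂ _ _ k (Ψ s k)).im = 0)
    -- the class 𝓛²(Σ;𝓗) of square-integrable functions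
    (SqInt : (ℝ → 𝓗) → Prop)
    (hSqInt : ∀ f, SqInt f ↔ Measurable f ∧
      Integrable (fun s => (@inner ℂ _ _ (f s) (Ψ s (f s))).re) σ)
    -- the quotient map π_Σ : 𝓛²(Σ;𝓗) → L²(Σ;𝓗)
    (π : (ℝ → 𝓗) → L)
    (hπadd : ∀ f g, SqInt f → SqInt g → π (f + g) = π f + π g)
    (hπsurj : ∀ x : L, ∃ f, SqInt f ∧ π f = x)
    (hπinner : ∀ f g, SqInt f → SqInt g →
      (@inner ℂ _ _ (π f) (π g)) = ∫ s, (@inner ℂ _ _ (f s) (Ψ s (g s))) ∂σ) :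
    -- the multiplication operator Λ_Σ (as a linear relation: its graph)
    let Lam : Submodule ℂ (L × L) := Submodule.span ℂ
      {p : L × L | ∃ f, SqInt f ∧ SqInt (fun s => s • f s) ∧
        p = (π f, π (fun s => s • f s))}
    -- Λ_Σ is self-adjoint: Λ_Σ = (Λ_Σ)*
    (Lam : Set (L × L)) = relAdjSet (Lam : Set (L × L)) := by
  obtain rfl : SqInt = SqIntegrable σ Ψ := funext fun f => propext (hSqInt f)
  have hπ : HasIntegralInner σ Ψ π := hπinner
  refine (span_subset_relAdjSet_span hπ.multGraph_subset_relAdjSet).antisymm ?_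
  rw [relAdjSet_span]
  exact (hπ.relAdjSet_multGraph_subset hΨpos hπadd hπsurj).trans Submodule.subset_span

/-- The multiplication operator `Λ_Σ` in `L²(Σ;𝓗)`, where `dΣ = Ψ dσ`: here `L` plays the
role of `L²(Σ;𝓗)`, `π` the quotient map, and `SqInt` the class `𝓛²(Σ;𝓗)` of
square-integrable functions. `Λ_Σ` is self-adjoint. -/
theorem stmt4 {𝓗 L : Type*} [NormedAddCommGroup 𝓗] [InnerProductSpace ℂ 𝓗]
    [FiniteDimensional ℂ 𝓗] [MeasurableSpace 𝓗] [BorelSpace 𝓗] [NormedAddCommGroup L] [InnerProductSpace ℂ L] [CompleteSpace L]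
    (σ : Measure ℝ) [IsLocallyFiniteMeasure σ]
    (Ψ : ℝ → 𝓗 →L[ℂ] 𝓗)
    -- Ψ(s) ≥ 0 σ-a.e.
    (hΨpos : ∀ᵐ s ∂σ, ∀ k : 𝓗,
      0 ≤ (@inner ℂ _ _ k (Ψ s k)).re ∧ (@inner ℂ _ _ k (Ψ s k)).im = 0)
    -- the class 𝓛²(Σ;𝓗) of square-integrable functions
    (SqInt : (ℝ → 𝓗) → Prop)
    (hSqInt : ∀ f, SqInt f ↔ Measurable f ∧
      Integrable (fun s => (@inner ℂ _ _ (f s) (Ψ s (f s))).re) σ)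
    -- the quotient map π_Σ : 𝓛²(Σ;𝓗) → L²(Σ;𝓗)
    (π : (ℝ → 𝓗) → L)
    (hπadd : ∀ f g, SqInt f → SqInt g → π (f + g) = π f + π g)
    (hπsmul : ∀ (c : ℂ) f, SqInt f → π (c • f) = c • π f)
    (hπsurj : ∀ x : L, ∃ f, SqInt f ∧ π f = x)
    (hπinner : ∀ f g, SqInt f → SqInt g →
      (@inner ℂ _ _ (π f) (π g)) = ∫ s, (@inner ℂ _ _ (f s) (Ψ s (g s))) ∂σ) :
    -- the multiplication operator Λ_Σ (as a linear relation: its graph)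
    let Lam : Submodule ℂ (L × L) := Submodule.span ℂ
      {p : L × L | ∃ f, SqInt f ∧ SqInt (fun s => s • f s) ∧
        p = (π f, π (fun s => s • f s))}
    -- Λ_Σ is self-adjoint: Λ_Σ = (Λ_Σ)*
    (Lam : Set (L × L)) = relAdjSet (Lam : Set (L × L)) :=
  stmt4_general σ Ψ hΨpos SqInt hSqInt π hπadd hπsurj hπinner

end
end

section
/- Let Φ : ℂ₊ → [𝓗] be a holomorphic operator-valued function on the upper half-plane of a Hilbert space 𝓗 with Im Φ(λ) ≥ 0 for all λ ∈ ℂ₊. Then the strong limit B := s-lim_{y→+∞} (1/(iy)) Φ(iy) exists and B ≥ 0. -/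
/-!
For a scalar function `φ` holomorphic on the upper half-plane with `Im φ ≥ 0`, the Schwarz lemma,
conjugated by Cayley transforms, gives the Schwarz–Pick inequality
`|φ z - φ w|² Im z Im w ≤ Im φ(z) Im φ(w) |z - w|²`. On the imaginary axis it makes
`Im φ(iy) / y` decreasing, hence convergent to some `l ≥ 0`, and it bounds `|φ(iY)| / Y`
asymptotically by `l`; since `Re (φ(iY) / (iY)) = Im φ(iY) / Y`, this forces `φ(iy) / (iy) → l`.
For the operator function, the scalar result applies to every `⟪x, Φ(·) x⟫`. Polarization then
gives weak convergence of `Φ(iy) / (iy)`, which is strong convergence in finite dimension, and the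
limit is a continuous linear map by Banach–Steinhaus. Its quadratic form is the limit of the
scalar ones, which are real and nonnegative.
-/

open Complex Filter Metric Set Topology ComplexConjugate
open scoped InnerProductSpace

noncomputable def cayley (q u : ℂ) : ℂ := (u - q) / (u - conj q)

noncomputable def cayleyInv (w ζ : ℂ) : ℂ := (w - conj w * ζ) / (1 - ζ)

lemma normSq_sub_conj (u q : ℂ) :
    normSq (u - conj q) = normSq (u - q) + 4 * u.im * q.im := by
  simp only [normSq_apply, sub_re, sub_im, conj_re, conj_im]
  ring

lemma sub_conj_ne_zero {u q : ℂ} (hu : 0 ≤ u.im) (hq : 0 < q.im) : u - conj q ≠ 0 := by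
  intro h
  have := congrArg im h
  simp only [sub_im, conj_im, zero_im] at this
  linarith

lemma normSq_sub_add_four_mul_im_mul_im_pos {u q : ℂ} (hu : 0 ≤ u.im) (hq : 0 < q.im) :
    0 < normSq (u - q) + 4 * u.im * q.im :=
  normSq_sub_conj u q ▸ normSq_pos.2 (sub_conj_ne_zero hu hq)

lemma normSq_cayley (q u : ℂ) :
    normSq (cayley q u) = normSq (u - q) / (normSq (u - q) + 4 * u.im * q.im) := by
  rw [cayley, normSq_div, normSq_sub_conj]

lemma cayley_self (q : ℂ) : cayley q q = 0 := by simp [cayley]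

lemma norm_cayley_le_one {q u : ℂ} (hq : 0 < q.im) (hu : 0 ≤ u.im) : ‖cayley q u‖ ≤ 1 := by
  rw [← sq_le_one_iff₀ (norm_nonneg _), Complex.sq_norm, normSq_cayley]
  exact div_le_one_of_le₀ (by nlinarith) (normSq_sub_add_four_mul_im_mul_im_pos hu hq).le

lemma norm_cayley_lt_one {q u : ℂ} (hq : 0 < q.im) (hu : 0 < u.im) : ‖cayley q u‖ < 1 := by
  rw [← sq_lt_one_iff₀ (norm_nonneg _), Complex.sq_norm, normSq_cayley]
  exact (div_lt_one (normSq_sub_add_four_mul_im_mul_im_pos hu.le hq)).2 (by nlinarith)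

lemma im_cayleyInv (w ζ : ℂ) :
    (cayleyInv w ζ).im = w.im * (1 - normSq ζ) / normSq (1 - ζ) := by
  simp only [cayleyInv, div_im, normSq_apply, sub_re, sub_im, mul_re, mul_im, conj_re, conj_im,
    one_re, one_im]
  ring

lemma cayleyInv_zero (w : ℂ) : cayleyInv w 0 = w := by simp [cayleyInv]

lemma cayleyInv_cayley {w z : ℂ} (hw : 0 < w.im) (hz : 0 < z.im) :
    cayleyInv w (cayley w z) = z := by
  have h₁ : z - conj w ≠ 0 := sub_conj_ne_zero hz.le hw
  have h₂ : w - conj w ≠ 0 := sub_conj_ne_zero hw.le hw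
  have h₃ : 1 - (z - w) / (z - conj w) ≠ 0 := by
    rw [one_sub_div h₁]; simpa using ⟨h₂, h₁⟩
  rw [cayleyInv, cayley, div_eq_iff h₃]
  field_simp
  ring

lemma Complex.tendsto_ofReal_of_tendsto_re_of_tendsto_norm {α : Type*} {f : Filter α}
    {w : α → ℂ} {l : ℝ} (hre : Tendsto (fun a => (w a).re) f (𝓝 l))
    (hnorm : Tendsto (fun a => ‖w a‖) f (𝓝 l)) : Tendsto w f (𝓝 (l : ℂ)) := by
  have hsq : ∀ a, ‖w a - l‖ ^ 2 = ‖w a‖ ^ 2 - 2 * l * (w a).re + l ^ 2 := fun a => by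
    simp only [Complex.sq_norm, normSq_apply, sub_re, sub_im, ofReal_re, ofReal_im]; ring
  have : Tendsto (fun a => ‖w a - l‖ ^ 2) f (𝓝 0) := by
    simp_rw [hsq]
    convert ((hnorm.pow 2).sub (hre.const_mul (2 * l))).add_const (l ^ 2) using 2
    ring
  rw [tendsto_iff_norm_sub_tendsto_zero]
  simpa [Real.sqrt_sq (norm_nonneg _)] using this.sqrt

lemma Complex.re_inv_I_mul_ofReal_mul (y : ℝ) (z : ℂ) : ((I * y)⁻¹ * z).re = z.im / y := by
  rw [mul_inv, inv_I, ← ofReal_inv]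
  simp only [neg_mul, neg_re, mul_re, mul_im, I_re, I_im, ofReal_re, ofReal_im]
  ring

structure IsNevanlinna (φ : ℂ → ℂ) : Prop where
  differentiableOn : DifferentiableOn ℂ φ {z : ℂ | 0 < z.im}
  im_nonneg : ∀ z : ℂ, 0 < z.im → 0 ≤ (φ z).im

namespace IsNevanlinna

variable {φ : ℂ → ℂ}

lemma add_const (hφ : IsNevanlinna φ) {c : ℂ} (hc : 0 ≤ c.im) :
    IsNevanlinna fun z => φ z + c where
  differentiableOn := hφ.differentiableOn.add_const c
  im_nonneg z hz := by simpa using add_nonneg (hφ.im_nonneg z hz) hc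

lemma norm_cayley_le (hφ : IsNevanlinna φ) {z w : ℂ} (hz : 0 < z.im) (hw : 0 < w.im)
    (hφw : 0 < (φ w).im) : ‖cayley (φ w) (φ z)‖ ≤ ‖cayley w z‖ := by
  have hinv : ∀ ζ ∈ ball (0 : ℂ) 1, 0 < (cayleyInv w ζ).im := by
    intro ζ hζ
    have hζ1 : normSq ζ < 1 := by
      rw [← Complex.sq_norm, sq_lt_one_iff₀ (norm_nonneg _)]; simpa using hζ
    have : 1 - ζ ≠ 0 := fun h => by simp [sub_eq_zero.1 h |>.symm] at hζ1
    rw [im_cayleyInv]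
    exact div_pos (mul_pos hw (by linarith)) (normSq_pos.2 this)
  have hdiff : DifferentiableOn ℂ (fun ζ => cayley (φ w) (φ (cayleyInv w ζ))) (ball 0 1) := by
    intro ζ hζ
    have hζ1 : 1 - ζ ≠ 0 := fun h => by
      simp [sub_eq_zero.1 h |>.symm] at hζ
    have hK : DifferentiableAt ℂ (cayleyInv w) ζ := by
      unfold cayleyInv; fun_prop (disch := exact hζ1)
    have hφK : DifferentiableWithinAt ℂ (fun ζ => φ (cayleyInv w ζ)) (ball 0 1) ζ :=
      (hφ.differentiableOn _ (hinv ζ hζ)).comp ζ hK.differentiableWithinAt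
        (fun ζ hζ => hinv ζ hζ)
    have hC : DifferentiableAt ℂ (cayley (φ w)) (φ (cayleyInv w ζ)) := by
      unfold cayley
      fun_prop (disch := exact sub_conj_ne_zero (hφ.im_nonneg _ (hinv ζ hζ)) hφw)
    exact hC.comp_differentiableWithinAt ζ hφK
  have hmaps : MapsTo (fun ζ => cayley (φ w) (φ (cayleyInv w ζ))) (ball 0 1) (closedBall 0 1) :=
    fun ζ hζ => mem_closedBall_zero_iff.2 <|
      norm_cayley_le_one hφw (hφ.im_nonneg _ (hinv ζ hζ))
  simpa [cayleyInv_cayley hw hz] using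
    norm_le_norm_of_mapsTo_ball hdiff hmaps (by simp [cayleyInv_zero, cayley_self])
      (norm_cayley_lt_one hw hz)

lemma normSq_sub_mul_le_of_im_pos (hφ : IsNevanlinna φ) {z w : ℂ} (hz : 0 < z.im)
    (hw : 0 < w.im) (hφw : 0 < (φ w).im) :
    normSq (φ z - φ w) * (z.im * w.im) ≤ (φ z).im * (φ w).im * normSq (z - w) := by
  have h := hφ.norm_cayley_le hz hw hφw
  rw [← sq_le_sq₀ (norm_nonneg _) (norm_nonneg _), Complex.sq_norm, Complex.sq_norm,
    normSq_cayley, normSq_cayley,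
    div_le_div_iff₀ (normSq_sub_add_four_mul_im_mul_im_pos (hφ.im_nonneg z hz) hφw)
      (normSq_sub_add_four_mul_im_mul_im_pos hz.le hw)] at h
  nlinarith

theorem normSq_sub_mul_le (hφ : IsNevanlinna φ) {z w : ℂ} (hz : 0 < z.im) (hw : 0 < w.im) :
    normSq (φ z - φ w) * (z.im * w.im) ≤ (φ z).im * (φ w).im * normSq (z - w) := by
  have hε : ∀ ε : ℝ, 0 < ε →
      normSq (φ z - φ w) * (z.im * w.im) ≤ ((φ z).im + ε) * ((φ w).im + ε) * normSq (z - w) := by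
    intro ε hε
    have := (hφ.add_const (c := ε * I) (by simpa using hε.le)).normSq_sub_mul_le_of_im_pos hz hw
      (by simpa using add_pos_of_nonneg_of_pos (hφ.im_nonneg w hw) hε)
    simpa using this
  have hlim : Tendsto (fun ε : ℝ => ((φ z).im + ε) * ((φ w).im + ε) * normSq (z - w))
      (𝓝[>] 0) (𝓝 ((φ z).im * (φ w).im * normSq (z - w))) := by
    have := (by fun_prop : Continuous fun ε : ℝ =>
      ((φ z).im + ε) * ((φ w).im + ε) * normSq (z - w)).tendsto 0
    simpa using this.mono_left (nhdsWithin_le_nhds (s := Ioi 0))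
  exact ge_of_tendsto hlim (eventually_nhdsWithin_of_forall hε)

lemma normSq_sub_I_mul_le (hφ : IsNevanlinna φ) {y Y : ℝ} (hy : 0 < y) (hY : 0 < Y) :
    normSq (φ (I * y) - φ (I * Y)) * (y * Y) ≤ (φ (I * y)).im * (φ (I * Y)).im * (y - Y) ^ 2 := by
  have h := hφ.normSq_sub_mul_le (z := I * y) (w := I * Y) (by simpa using hy) (by simpa using hY)
  have hd : normSq (I * y - I * Y) = (y - Y) ^ 2 := by
    rw [← mul_sub, normSq_mul, normSq_I, ← ofReal_sub, normSq_ofReal]; ring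
  simpa [hd] using h

lemma im_div_antitoneOn (hφ : IsNevanlinna φ) :
    AntitoneOn (fun y : ℝ => (φ (I * y)).im / y) (Ioi 0) := by
  intro y hy Y hY hyY
  simp only [mem_Ioi] at hy hY
  have hu := hφ.im_nonneg (I * y) (by simpa using hy)
  have hv := hφ.im_nonneg (I * Y) (by simpa using hY)
  have h := hφ.normSq_sub_I_mul_le hy hY
  set u := (φ (I * y)).im
  set v := (φ (I * Y)).im
  have hre : (u - v) ^ 2 ≤ normSq (φ (I * y) - φ (I * Y)) := by
    rw [normSq_apply, sub_im, sub_re]; nlinarith [sq_nonneg ((φ (I * y)).re - (φ (I * Y)).re)]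
  -- the Schwarz–Pick bound factors as `(u Y - v y) (u y - v Y) ≤ 0`
  have hfac : (u * Y - v * y) * (u * y - v * Y) ≤ 0 := by
    nlinarith [mul_le_mul_of_nonneg_right hre (mul_pos hy hY).le]
  rw [div_le_div_iff₀ hY hy]
  by_contra! hlt
  nlinarith [mul_le_mul_of_nonneg_left hyY hu, mul_le_mul_of_nonneg_left hyY hv]

lemma norm_sub_le (hφ : IsNevanlinna φ) {y Y : ℝ} (hy : 0 < y) (hyY : y ≤ Y) :
    ‖φ (I * Y) - φ (I * y)‖ ≤ (φ (I * y)).im / y * (Y - y) := by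
  have hY := hy.trans_le hyY
  have hu := hφ.im_nonneg (I * y) (by simpa using hy)
  have h := hφ.normSq_sub_I_mul_le hy hY
  have hmono := hφ.im_div_antitoneOn hy hY hyY
  simp only [div_le_div_iff₀ hY hy] at hmono
  rw [norm_sub_rev]
  apply le_of_sq_le_sq _ (mul_nonneg (div_nonneg hu hy.le) (by linarith))
  rw [Complex.sq_norm, mul_pow, div_pow, div_mul_eq_mul_div, le_div_iff₀ (by positivity)]
  nlinarith [mul_le_mul_of_nonneg_right hmono (mul_nonneg hu (sq_nonneg (y - Y)))]

lemma exists_tendsto_im_div (hφ : IsNevanlinna φ) :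
    ∃ l : ℝ, 0 ≤ l ∧ Tendsto (fun y : ℝ => (φ (I * y)).im / y) atTop (𝓝 l) := by
  set r := fun y : ℝ => (φ (I * y)).im / y
  have hr0 : ∀ y, 0 ≤ r (max y 1) := fun y =>
    div_nonneg (hφ.im_nonneg _ (by simp)) (by positivity)
  have hanti : Antitone fun y => r (max y 1) := fun a b hab =>
    hφ.im_div_antitoneOn (by simp) (by simp) (max_le_max_right 1 hab)
  have hlim := tendsto_atTop_ciInf hanti ⟨0, by rintro _ ⟨y, rfl⟩; exact hr0 y⟩
  refine ⟨_, le_ciInf hr0, hlim.congr' ?_⟩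
  filter_upwards [eventually_ge_atTop 1] with y hy
  rw [max_eq_left hy]

theorem exists_tendsto_inv_I_mul_mul (hφ : IsNevanlinna φ) :
    ∃ l : ℝ, 0 ≤ l ∧ Tendsto (fun y : ℝ => (I * y)⁻¹ * φ (I * y)) atTop (𝓝 (l : ℂ)) := by
  obtain ⟨l, hl0, hlim⟩ := hφ.exists_tendsto_im_div
  have hre : Tendsto (fun y : ℝ => ((I * y)⁻¹ * φ (I * y)).re) atTop (𝓝 l) := by
    simpa only [re_inv_I_mul_ofReal_mul] using hlim
  refine ⟨l, hl0, tendsto_ofReal_of_tendsto_re_of_tendsto_norm hre ?_⟩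
  refine tendsto_order.2 ⟨fun a ha => ?_, fun a ha => ?_⟩
  · filter_upwards [hre.eventually (lt_mem_nhds ha)] with y hy
    exact hy.trans_le (re_le_norm _)
  -- for `y ≤ Y`, `‖φ (I Y)‖ / Y ≤ ‖φ (I y)‖ / Y + (φ (I y)).im / y`, with `y` chosen so that
  -- the last term is below `(l + a) / 2`
  obtain ⟨y, hy1, hyl⟩ := ((eventually_ge_atTop 1).and
    (hlim.eventually (gt_mem_nhds (show l < (l + a) / 2 by linarith)))).exists
  have hy : (0 : ℝ) < y := by linarith
  have hsmall : Tendsto (fun Y : ℝ => ‖φ (I * y)‖ / Y) atTop (𝓝 0) :=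
    tendsto_const_nhds.div_atTop tendsto_id
  filter_upwards [eventually_ge_atTop y, hsmall.eventually (gt_mem_nhds
    (show 0 < (a - l) / 2 by linarith))] with Y hyY hsmallY
  have hY : 0 < Y := hy.trans_le hyY
  have hbound := (norm_sub_norm_le _ _).trans (hφ.norm_sub_le hy hyY)
  rw [norm_mul, norm_inv, norm_mul, norm_I, one_mul, norm_real, Real.norm_of_nonneg hY.le,
    inv_mul_eq_div, div_lt_iff₀ hY]
  rw [div_lt_iff₀ hY] at hsmallY
  nlinarith [div_nonneg (hφ.im_nonneg (I * y) (by simpa using hy)) hy.le]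

end IsNevanlinna

lemma inner_map_polarization_right {V : Type*} [NormedAddCommGroup V] [InnerProductSpace ℂ V]
    (T : V →ₗ[ℂ] V) (x y : V) :
    ⟪x, T y⟫_ℂ = (⟪x + y, T (x + y)⟫_ℂ - ⟪x - y, T (x - y)⟫_ℂ
      - I * ⟪x + I • y, T (x + I • y)⟫_ℂ + I * ⟪x - I • y, T (x - I • y)⟫_ℂ) / 4 := by
  simp only [map_add, map_sub, map_smul, inner_add_left, inner_add_right, inner_sub_left,
    inner_sub_right, inner_smul_left, inner_smul_right, conj_I]
  ring_nf
  simp only [I_sq]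
  ring

lemma exists_tendsto_inner_of_forall_tendsto_inner_self {α V : Type*} [NormedAddCommGroup V]
    [InnerProductSpace ℂ V] {f : Filter α} {T : α → V →L[ℂ] V}
    (h : ∀ v, ∃ c, Tendsto (fun a => ⟪v, T a v⟫_ℂ) f (𝓝 c)) (x y : V) :
    ∃ c, Tendsto (fun a => ⟪x, T a y⟫_ℂ) f (𝓝 c) := by
  choose c hc using h
  have hpol := fun a => inner_map_polarization_right (T a : V →ₗ[ℂ] V) x y
  simp only [ContinuousLinearMap.coe_coe] at hpol
  simp_rw [hpol]
  exact ⟨_, ((((hc _).sub (hc _)).sub ((hc _).const_mul I)).add ((hc _).const_mul I)).div_const 4⟩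

lemma exists_tendsto_of_forall_tendsto_inner {α 𝕜 E : Type*} [RCLike 𝕜] [NormedAddCommGroup E]
    [InnerProductSpace 𝕜 E] [FiniteDimensional 𝕜 E] {f : Filter α} {g : α → E}
    (h : ∀ v, ∃ c, Tendsto (fun a => ⟪v, g a⟫_𝕜) f (𝓝 c)) :
    ∃ x, Tendsto g f (𝓝 x) := by
  choose c hc using h
  set b := stdOrthonormalBasis 𝕜 E
  refine ⟨∑ i, c (b i) • b i, ?_⟩
  rw [show g = fun a => ∑ i, ⟪b i, g a⟫_𝕜 • b i from funext fun a => (b.sum_repr' (g a)).symm]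
  exact tendsto_finsetSum _ fun i _ => (hc (b i)).smul_const (b i)

lemma isNevanlinna_inner_apply {V : Type*} [NormedAddCommGroup V] [InnerProductSpace ℂ V]
    {Φ : ℂ → V →L[ℂ] V} (hol : DifferentiableOn ℂ Φ {z : ℂ | 0 < z.im})
    (him : ∀ z : ℂ, 0 < z.im → ∀ h : V, 0 ≤ (⟪h, Φ z h⟫_ℂ).im) (x : V) :
    IsNevanlinna fun z => ⟪x, Φ z x⟫_ℂ where
  differentiableOn :=
    ((innerSL ℂ x).comp (ContinuousLinearMap.apply ℂ V x)).differentiable.comp_differentiableOn hol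
  im_nonneg z hz := him z hz x

/-- If `Φ : ℂ₊ → [𝓗]` is holomorphic with `Im Φ(λ) ≥ 0` on the upper half-plane, then the
strong limit `B = s-lim_{y→+∞} (1/(iy)) Φ(iy)` exists and `B ≥ 0`. -/
theorem stmt6 {𝓗 : Type*} [NormedAddCommGroup 𝓗] [InnerProductSpace ℂ 𝓗]
    [FiniteDimensional ℂ 𝓗]
    (Φ : ℂ → 𝓗 →L[ℂ] 𝓗)
    (hol : DifferentiableOn ℂ Φ {z : ℂ | 0 < z.im})
    (him : ∀ z : ℂ, 0 < z.im → ∀ h : 𝓗, 0 ≤ (@inner ℂ _ _ h (Φ z h)).im) :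
    ∃ B : 𝓗 →L[ℂ] 𝓗,
      (∀ h : 𝓗, Filter.Tendsto
        (fun y : ℝ => (Complex.I * (y : ℂ))⁻¹ • Φ (Complex.I * (y : ℂ)) h)
        Filter.atTop (nhds (B h))) ∧
      (∀ h : 𝓗, 0 ≤ (@inner ℂ _ _ h (B h)).re ∧ (@inner ℂ _ _ h (B h)).im = 0) := by
  set Q : ℝ → 𝓗 →L[ℂ] 𝓗 := fun y => (I * y)⁻¹ • Φ (I * y)
  have hdiag : ∀ x, ∃ c : ℝ, 0 ≤ c ∧ Tendsto (fun y => ⟪x, Q y x⟫_ℂ) atTop (𝓝 c) := by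
    simpa [Q, inner_smul_right] using
      fun x => (isNevanlinna_inner_apply hol him x).exists_tendsto_inv_I_mul_mul
  choose c hc0 hc using hdiag
  have hweak := exists_tendsto_inner_of_forall_tendsto_inner_self fun x => ⟨_, hc x⟩
  choose b hb using fun h => exists_tendsto_of_forall_tendsto_inner fun v => hweak v h
  let B := continuousLinearMapOfTendsto Q (tendsto_pi_nhds.2 hb)
  refine ⟨B, hb, fun h => ?_⟩
  have hBh : ⟪h, B h⟫_ℂ = c h :=
    tendsto_nhds_unique (((innerSL ℂ h).continuous.tendsto _).comp (hb h)) (hc h)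
  simp [hBh, hc0 h]
end
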